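/- arXiv:2301.13327 — 2 statements merged into one kernel-verified Lean document; each statement's English description precedes it below -/
import Mathlib

section
/- If x* is a weak Pareto minimum of (f_1,...,f_r) on X, and f_i(x*) > 0 for all i, then with the weights w_i := (f_i(x*))^{-1} / (∑_{j=1}^r (f_j(x*))^{-1}), which are positive and sum to 1, the point x* minimizes the weighted Chebyshev function max_i w_i f_i(x) over X. -/
/-! Normalising the inverses `(f i xs)⁻¹` makes every weighted objective `w i * f i xs` equal the
same constant `c`, so the Chebyshev value at `xs` is `c`. At any other point `x`, weak Pareto
minimality gives an index with `f i xs ≤ f i x`, hence `c ≤ w i * f i x`, which is bounded by the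
Chebyshev value at `x`. -/

theorem Finset.sup'_le_sup'_of_forall_eq {ι α : Type*} [SemilatticeSup α] {s : Finset ι}
    (hs : s.Nonempty) {a b : ι → α} {c : α} (ha : ∀ i ∈ s, a i = c) (hb : ∃ i ∈ s, c ≤ b i) :
    s.sup' hs a ≤ s.sup' hs b := by
  obtain ⟨j, hj, hcj⟩ := hb
  exact Finset.sup'_le _ _ fun i hi => (ha i hi).trans_le (hcj.trans (Finset.le_sup' b hj))

section InverseWeights

variable {ι K : Type*} [Fintype ι] [Field K] {g : ι → K}

theorem inv_div_sum_inv_mul_self {i : ι} (hi : g i ≠ 0) :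
    (g i)⁻¹ / (∑ j, (g j)⁻¹) * g i = (∑ j, (g j)⁻¹)⁻¹ := by
  rw [div_mul_eq_mul_div, inv_mul_cancel₀ hi, one_div]

variable [LinearOrder K] [IsStrictOrderedRing K] [Nonempty ι]

theorem sum_inv_pos (hg : ∀ i, 0 < g i) : 0 < ∑ j, (g j)⁻¹ :=
  Finset.sum_pos (fun j _ => inv_pos.mpr (hg j)) Finset.univ_nonempty

theorem inv_div_sum_inv_pos (hg : ∀ i, 0 < g i) (i : ι) : 0 < (g i)⁻¹ / ∑ j, (g j)⁻¹ :=
  div_pos (inv_pos.mpr (hg i)) (sum_inv_pos hg)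

theorem sum_inv_div_sum_inv (hg : ∀ i, 0 < g i) : ∑ i, (g i)⁻¹ / ∑ j, (g j)⁻¹ = 1 := by
  rw [← Finset.sum_div, div_self (sum_inv_pos hg).ne']

end InverseWeights

theorem weak_pareto_is_chebyshev_min_general {X : Type*} {r : ℕ} (hr : 0 < r)
    (f : Fin r → X → ℝ) (hf : ∀ i (x : X), 0 < f i x) (xs : X)
    (hpar : ¬ ∃ x : X, ∀ i, f i x < f i xs)
    (w : Fin r → ℝ)
    (hw : ∀ i, w i = (f i xs)⁻¹ / ∑ j, (f j xs)⁻¹) :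
    (∀ i, 0 < w i) ∧ (∑ i, w i = 1) ∧
    ∀ x : X,
      (Finset.univ.sup' (Finset.univ_nonempty_iff.mpr (Fin.pos_iff_nonempty.mp hr))
        fun i => w i * f i xs) ≤
      Finset.univ.sup' (Finset.univ_nonempty_iff.mpr (Fin.pos_iff_nonempty.mp hr))
        fun i => w i * f i x := by
  have := Fin.pos_iff_nonempty.mp hr
  have hxs : ∀ i, 0 < f i xs := fun i => hf i xs
  have hw_pos : ∀ i, 0 < w i := fun i => hw i ▸ inv_div_sum_inv_pos hxs i
  have hw_mul : ∀ i, w i * f i xs = (∑ j, (f j xs)⁻¹)⁻¹ := fun i => by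
    rw [hw i]
    exact inv_div_sum_inv_mul_self (g := fun j => f j xs) (hxs i).ne'
  refine ⟨hw_pos, by simp only [hw, sum_inv_div_sum_inv hxs], fun x => ?_⟩
  push Not at hpar
  obtain ⟨i, hi⟩ := hpar x
  refine Finset.sup'_le_sup'_of_forall_eq _ (fun i _ => hw_mul i) ⟨i, Finset.mem_univ i, ?_⟩
  rw [← hw_mul i]
  exact mul_le_mul_of_nonneg_left hi (hw_pos i).le

/-- If `xs` is a weak Pareto minimum of `(f 1,...,f r)` on a nonempty `X`, with
`f i xs > 0` for all `i`, then with weights `w i = (f i xs)⁻¹ / ∑ j, (f j xs)⁻¹`,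
which are positive and sum to 1, `xs` minimizes the weighted Chebyshev function. -/
theorem weak_pareto_is_chebyshev_min {X : Type*} [Nonempty X] {r : ℕ} (hr : 0 < r)
    (f : Fin r → X → ℝ) (hf : ∀ i (x : X), 0 < f i x) (xs : X)
    (hpar : ¬ ∃ x : X, ∀ i, f i x < f i xs)
    (w : Fin r → ℝ)
    (hw : ∀ i, w i = (f i xs)⁻¹ / ∑ j, (f j xs)⁻¹) :
    (∀ i, 0 < w i) ∧ (∑ i, w i = 1) ∧
    ∀ x : X,
      (Finset.univ.sup' (Finset.univ_nonempty_iff.mpr (Fin.pos_iff_nonempty.mp hr))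
        fun i => w i * f i xs) ≤
      Finset.univ.sup' (Finset.univ_nonempty_iff.mpr (Fin.pos_iff_nonempty.mp hr))
        fun i => w i * f i x :=
  weak_pareto_is_chebyshev_min_general hr f hf xs hpar w hw
end

section
/- A point x* ∈ X is a weak Pareto minimum of two nonnegative objectives (f_1, f_2) on X if and only if there exists w ∈ (0,1) such that x* minimizes max{w f_1(x), (1−w) f_2(x)} over X. -/
/-! A common strict improvement of both objectives strictly lowers the weighted maximum for any
positive weights. Conversely, the weight `w = f2 xs / (f1 xs + f2 xs)` makes the two weighted terms
equal at `xs`, so a point with a smaller weighted maximum would improve both objectives. -/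

section

variable {α : Type*} [Semiring α] [LinearOrder α] [IsStrictOrderedRing α]

theorem max_mul_lt_max_mul {a b u v u' v' : α} (ha : 0 < a) (hb : 0 < b) (hu : u' < u)
    (hv : v' < v) : max (a * u') (b * v') < max (a * u) (b * v) :=
  max_lt_max (mul_lt_mul_of_pos_left hu ha) (mul_lt_mul_of_pos_left hv hb)

theorem max_mul_le_max_mul_of_mul_eq {a b u v u' v' : α} (ha : 0 ≤ a) (hb : 0 ≤ b)
    (hbal : a * u = b * v) (h : ¬ (u' < u ∧ v' < v)) :
    max (a * u) (b * v) ≤ max (a * u') (b * v') := by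
  rw [hbal, max_self]
  rcases not_and_or.1 h with hu | hv
  · calc b * v = a * u := hbal.symm
      _ ≤ a * u' := mul_le_mul_of_nonneg_left (not_lt.1 hu) ha
      _ ≤ _ := le_max_left _ _
  · exact (mul_le_mul_of_nonneg_left (not_lt.1 hv) hb).trans (le_max_right _ _)

end

theorem exists_mem_Ioo_mul_eq_one_sub_mul {α : Type*} [Field α] [LinearOrder α]
    [IsStrictOrderedRing α] {p q : α} (hp : 0 < p) (hq : 0 < q) :
    ∃ w ∈ Set.Ioo (0 : α) 1, w * p = (1 - w) * q := by
  have hpq : 0 < p + q := add_pos hp hq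
  refine ⟨q / (p + q), ⟨div_pos hq hpq, (div_lt_one hpq).2 (lt_add_of_pos_left q hp)⟩, ?_⟩
  field_simp
  ring

theorem weak_pareto_iff_chebyshev_two_obj_general {X : Type*}
    (f1 f2 : X → ℝ) (h1 : ∀ x, 0 < f1 x) (h2 : ∀ x, 0 < f2 x) (xs : X) :
    (¬ ∃ x : X, f1 x < f1 xs ∧ f2 x < f2 xs) ↔
    ∃ w : ℝ, w ∈ Set.Ioo (0 : ℝ) 1 ∧
      ∀ x : X, max (w * f1 xs) ((1 - w) * f2 xs) ≤ max (w * f1 x) ((1 - w) * f2 x) := by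
  constructor
  · intro hpareto
    obtain ⟨w, hw, hbal⟩ := exists_mem_Ioo_mul_eq_one_sub_mul (h1 xs) (h2 xs)
    exact ⟨w, hw, fun x =>
      max_mul_le_max_mul_of_mul_eq hw.1.le (sub_nonneg.2 hw.2.le) hbal fun h => hpareto ⟨x, h⟩⟩
  · rintro ⟨w, ⟨hw0, hw1⟩, hmin⟩ ⟨x, hx1, hx2⟩
    exact (hmin x).not_gt (max_mul_lt_max_mul hw0 (sub_pos.2 hw1) hx1 hx2)

/-- A point `xs` is a weak Pareto minimum of two positive objectives `(f1, f2)` on `X`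
iff there exists `w ∈ (0,1)` such that `xs` minimizes `max (w * f1 x) ((1-w) * f2 x)`. -/
theorem weak_pareto_iff_chebyshev_two_obj {X : Type*} [Nonempty X]
    (f1 f2 : X → ℝ) (h1 : ∀ x, 0 < f1 x) (h2 : ∀ x, 0 < f2 x) (xs : X) :
    (¬ ∃ x : X, f1 x < f1 xs ∧ f2 x < f2 xs) ↔
    ∃ w : ℝ, w ∈ Set.Ioo (0 : ℝ) 1 ∧
      ∀ x : X, max (w * f1 xs) ((1 - w) * f2 xs) ≤ max (w * f1 x) ((1 - w) * f2 x) :=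
  weak_pareto_iff_chebyshev_two_obj_general f1 f2 h1 h2 xs
end
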